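/- Fix real a, and let b̃, σ²_w > 0 with constant total extra delay d = c + fN ≥ 0. Define p(τ) = e^{2a(τ+d)} p∞(τ) + q(τ+d) on (0,∞), with p∞(τ) = (b̃/τ)(a + √(a² + (σ²_w/b̃)τ)) and q(T) = (σ²_w/(2a))(e^{2aT}−1) for a ≠ 0, q(T) = σ²_w T for a = 0. Then p is differentiable on (0,∞), and every critical point τ of p satisfies (σ²_w/b̃)τ³ + a²τ² = 1/4. -/

import Mathlib

/-!
Write `s = √(a² + kτ)` with `k = σ²_w / b̃`. Since `(s + a)(s - a) = kτ`, the steady-state term is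
`p∞(τ) = σ²_w / (s - a)`, and `q' = σ²_w e^{2aT}`. Differentiating and using `s² - a² = kτ` again,
`p'(τ) = e^{2a(τ+d)} · σ²_w k / (s - a)² · (τ - 1 / (2s))`, so a critical point has `2sτ = 1`;
squaring gives `4τ²(a² + kτ) = 1`.
-/

open Set Real

lemma lt_sqrt_sq_add (a : ℝ) {x : ℝ} (hx : 0 < x) : a < √(a ^ 2 + x) :=
  calc a ≤ |a| := le_abs_self a
    _ = √(a ^ 2) := (sqrt_sq_eq_abs a).symm
    _ < √(a ^ 2 + x) := sqrt_lt_sqrt (sq_nonneg a) (by linarith)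

lemma div_mul_add_sqrt_eq (b a k : ℝ) {τ : ℝ} (hk : 0 < k) (hτ : 0 < τ) :
    b / τ * (a + √(a ^ 2 + k * τ)) = b * k / (√(a ^ 2 + k * τ) - a) := by
  have hsub : √(a ^ 2 + k * τ) - a ≠ 0 := (sub_pos.2 (lt_sqrt_sq_add a (by positivity))).ne'
  have hsq : √(a ^ 2 + k * τ) ^ 2 = a ^ 2 + k * τ := sq_sqrt (by positivity)
  rw [div_mul_eq_mul_div, div_eq_div_iff hτ.ne' hsub]
  linear_combination b * hsq

lemma hasDerivAt_div_sqrt_sub (c a k : ℝ) {τ : ℝ} (hk : 0 < k) (hτ : 0 < τ) :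
    HasDerivAt (fun x => c / (√(a ^ 2 + k * x) - a))
      (-(c * k) / (2 * √(a ^ 2 + k * τ) * (√(a ^ 2 + k * τ) - a) ^ 2)) τ := by
  have hsub : √(a ^ 2 + k * τ) - a ≠ 0 := (sub_pos.2 (lt_sqrt_sq_add a (by positivity))).ne'
  have hin : HasDerivAt (fun x => a ^ 2 + k * x) k τ := by
    simpa using ((hasDerivAt_id τ).const_mul k).const_add (a ^ 2)
  have hs := ((hin.sqrt (by positivity)).sub_const a).inv hsub
  refine ((hs.const_mul c).congr_deriv ?_).congr_of_eventuallyEq ?_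
  · field_simp
  · exact Filter.Eventually.of_forall fun x => div_eq_mul_inv _ _

lemma hasDerivAt_ite_mul_exp_sub_one (a σ T : ℝ) :
    HasDerivAt (fun T => if a = 0 then σ * T else σ / (2 * a) * (exp (2 * a * T) - 1))
      (σ * exp (2 * a * T)) T := by
  by_cases ha : a = 0
  · simpa [ha] using (hasDerivAt_id T).const_mul σ
  · simp only [ha, if_false]
    refine ((((hasDerivAt_id' T).const_mul (2 * a)).exp.sub_const 1).const_mul
      (σ / (2 * a))).congr_deriv ?_
    field_simp

lemma two_mul_div_add_deriv_add_eq (c a k : ℝ) {τ : ℝ} (hk : 0 < k) (hτ : 0 < τ) :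
    2 * a * (c / (√(a ^ 2 + k * τ) - a))
        + -(c * k) / (2 * √(a ^ 2 + k * τ) * (√(a ^ 2 + k * τ) - a) ^ 2) + c
      = c * k / (√(a ^ 2 + k * τ) - a) ^ 2 * (τ - 1 / (2 * √(a ^ 2 + k * τ))) := by
  have hsub : √(a ^ 2 + k * τ) - a ≠ 0 := (sub_pos.2 (lt_sqrt_sq_add a (by positivity))).ne'
  have hpos : 0 < √(a ^ 2 + k * τ) := sqrt_pos.2 (by positivity)
  have hsq : √(a ^ 2 + k * τ) ^ 2 = a ^ 2 + k * τ := sq_sqrt (by positivity)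
  field_simp
  linear_combination (2 * c * √(a ^ 2 + k * τ)) * hsq

lemma hasDerivAt_errorVariance (a σw btil d : ℝ) {τ : ℝ} (hσ : 0 < σw) (hb : 0 < btil)
    (hτ : 0 < τ) :
    HasDerivAt (fun x => exp (2 * a * (x + d)) * (btil / x * (a + √(a ^ 2 + σw / btil * x))) +
        if a = 0 then σw * (x + d) else σw / (2 * a) * (exp (2 * a * (x + d)) - 1))
      (exp (2 * a * (τ + d)) * (σw * (σw / btil) / (√(a ^ 2 + σw / btil * τ) - a) ^ 2 *
        (τ - 1 / (2 * √(a ^ 2 + σw / btil * τ))))) τ := by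
  have hk : 0 < σw / btil := div_pos hσ hb
  have hpinf : HasDerivAt (fun x => btil / x * (a + √(a ^ 2 + σw / btil * x)))
      (-(σw * (σw / btil)) / (2 * √(a ^ 2 + σw / btil * τ) *
        (√(a ^ 2 + σw / btil * τ) - a) ^ 2)) τ := by
    refine (hasDerivAt_div_sqrt_sub σw a _ hk hτ).congr_of_eventuallyEq ?_
    filter_upwards [Ioi_mem_nhds hτ] with x hx
    rw [div_mul_add_sqrt_eq btil a _ hk hx, mul_div_cancel₀ _ hb.ne']
  have hexp := (((hasDerivAt_id' τ).add_const d).const_mul (2 * a)).exp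
  have hq := (hasDerivAt_ite_mul_exp_sub_one a σw (τ + d)).comp_add_const τ d
  refine ((hexp.mul hpinf).add hq).congr_deriv ?_
  rw [← two_mul_div_add_deriv_add_eq σw a _ hk hτ,
    div_mul_add_sqrt_eq btil a _ hk hτ, mul_div_cancel₀ _ hb.ne']
  ring

theorem stmt17_general (a σw btil d : ℝ) (hσ : 0 < σw) (hb : 0 < btil) :
    let pinf : ℝ → ℝ := fun τ => (btil / τ) * (a + Real.sqrt (a ^ 2 + (σw / btil) * τ))
    let q : ℝ → ℝ := fun T =>
      if a = 0 then σw * T else (σw / (2 * a)) * (Real.exp (2 * a * T) - 1)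
    let p : ℝ → ℝ := fun τ => Real.exp (2 * a * (τ + d)) * pinf τ + q (τ + d)
    (∀ τ ∈ Ioi (0 : ℝ), DifferentiableAt ℝ p τ) ∧
    (∀ τ ∈ Ioi (0 : ℝ), deriv p τ = 0 →
      (σw / btil) * τ ^ 3 + a ^ 2 * τ ^ 2 = 1 / 4) := by
  intro pinf q p
  refine ⟨fun τ hτ => (hasDerivAt_errorVariance a σw btil d hσ hb hτ).differentiableAt,
    fun τ (hτ : 0 < τ) hcrit => ?_⟩
  rw [(hasDerivAt_errorVariance a σw btil d hσ hb hτ).deriv] at hcrit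
  set s := √(a ^ 2 + σw / btil * τ)
  have hpos : 0 < s := sqrt_pos.2 (by positivity)
  have hsub : s - a ≠ 0 := (sub_pos.2 (lt_sqrt_sq_add a (by positivity))).ne'
  have hfac : σw * (σw / btil) / (s - a) ^ 2 ≠ 0 := by positivity
  have hτs : τ = 1 / (2 * s) := by
    rw [mul_eq_zero, mul_eq_zero, sub_eq_zero] at hcrit
    exact (hcrit.resolve_left (exp_ne_zero _)).resolve_left hfac
  have hsq : s ^ 2 = a ^ 2 + σw / btil * τ := sq_sqrt (by positivity)
  have h2sτ : 2 * s * τ = 1 := by rw [hτs]; field_simp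
  linear_combination (1 / 4 + s * τ / 2) * h2sτ - τ ^ 2 * hsq

theorem stmt17 (a σw btil d : ℝ) (hσ : 0 < σw) (hb : 0 < btil) (hd : 0 ≤ d) :
    let pinf : ℝ → ℝ := fun τ => (btil / τ) * (a + Real.sqrt (a ^ 2 + (σw / btil) * τ))
    let q : ℝ → ℝ := fun T =>
      if a = 0 then σw * T else (σw / (2 * a)) * (Real.exp (2 * a * T) - 1)
    let p : ℝ → ℝ := fun τ => Real.exp (2 * a * (τ + d)) * pinf τ + q (τ + d)
    (∀ τ ∈ Ioi (0 : ℝ), DifferentiableAt ℝ p τ) ∧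
    (∀ τ ∈ Ioi (0 : ℝ), deriv p τ = 0 →
      (σw / btil) * τ ^ 3 + a ^ 2 * τ ^ 2 = 1 / 4) :=
  stmt17_general a σw btil d hσ hb
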